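/- arXiv:1309.0894 — 9 statements merged into one kernel-verified Lean document; each statement's English description precedes it below -/
import Mathlib

section
/- Let A be a generalized ultrametric semilattice with distance set P, and let F : A → A be a contracting function. Then for every a ∈ A, the element F(a) ⊓ F(F(a)) is a post-fixed point of F, i.e., F(a) ⊓ F(F(a)) ⊑ F(F(a) ⊓ F(F(a))). -/
/-- A generalized ultrametric semilattice over a meet-semilattice `A`
(with induced order `a ⊑ b ↔ a ⊓ b = a`, i.e. the `≤` of `SemilatticeInf`)
and a pointed partially ordered distance set `P` with least element `⊥`. -/
structure GUSemilattice (A : Type*) (P : Type*) [SemilatticeInf A] [PartialOrder P] [OrderBot P] where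
  d : A → A → P
  d_eq_bot_iff : ∀ a₁ a₂ : A, d a₁ a₂ = ⊥ ↔ a₁ = a₂
  d_symm : ∀ a₁ a₂ : A, d a₁ a₂ = d a₂ a₁
  d_ultra : ∀ (a₁ a₂ a₃ : A) (p : P), d a₁ a₂ ≤ p → d a₂ a₃ ≤ p → d a₁ a₃ ≤ p
  inf_le_inf_of_d_le : ∀ a₁ a₂ a₃ : A, d a₁ a₂ ≤ d a₁ a₃ → a₁ ⊓ a₃ ≤ a₁ ⊓ a₂
  d_inf_inf_le : ∀ a₁ a₂ a₃ : A, d (a₁ ⊓ a₂) (a₁ ⊓ a₃) ≤ d a₂ a₃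

variable {A P : Type*} [SemilatticeInf A] [PartialOrder P] [OrderBot P]

/-- `F` is contracting. -/
def GUSemilattice.Contracting (S : GUSemilattice A P) (F : A → A) : Prop :=
  ∀ a₁ a₂ : A, S.d (F a₁) (F a₂) ≤ S.d a₁ a₂

/-- `F` is strictly contracting. -/
def GUSemilattice.StrictlyContracting (S : GUSemilattice A P) (F : A → A) : Prop :=
  ∀ a₁ a₂ : A, a₁ ≠ a₂ → S.d (F a₁) (F a₂) < S.d a₁ a₂

/-- `F` is strictly contracting on orbits. -/
def GUSemilattice.StrictlyContractingOnOrbits (S : GUSemilattice A P) (F : A → A) : Prop :=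
  ∀ a : A, a ≠ F a → S.d (F a) (F (F a)) < S.d a (F a)

/-- A ball in the generalized ultrametric space associated with `S`. -/
def GUSemilattice.IsBall (S : GUSemilattice A P) (B : Set A) : Prop :=
  ∃ (a : A) (p : P), B = {x : A | S.d x a ≤ p}

/-- Spherical completeness: every nonempty chain of balls has nonempty intersection. -/
def GUSemilattice.SphericallyComplete (S : GUSemilattice A P) : Prop :=
  ∀ C : Set (Set A), C.Nonempty → IsChain (· ⊆ ·) C → (∀ B ∈ C, S.IsBall B) → (⋂₀ C).Nonempty

/-- Directed-completeness: every nonempty directed subset has a least upper bound. -/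
def DirectedComplete (A : Type*) [Preorder A] : Prop :=
  ∀ D : Set A, D.Nonempty → DirectedOn (· ≤ ·) D → ∃ s : A, IsLUB D s

theorem inf_postFixed_of_contracting
    (S : GUSemilattice A P) (F : A → A)
    (hF : S.Contracting F) (a : A) :
    F a ⊓ F (F a) ≤ F (F a ⊓ F (F a)) := by
  set b := F a ⊓ F (F a) with hb
  have h1 : S.d b (F a) ≤ S.d (F a) (F (F a)) := by
    have := S.d_inf_inf_le (F a) (F (F a)) (F a)
    simpa [inf_idem, S.d_symm (F (F a)) (F a)] using this
  have h2 : S.d (F b) (F (F a)) ≤ S.d (F a) (F (F a)) :=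
    le_trans (hF b (F a)) h1
  have h3 : S.d (F (F a)) (F b) ≤ S.d (F (F a)) (F a) := by
    rw [S.d_symm (F (F a)) (F b), S.d_symm (F (F a)) (F a)]
    exact h2
  have h4 := S.inf_le_inf_of_d_le (F (F a)) (F b) (F a) h3
  calc b = F (F a) ⊓ F a := by rw [hb, inf_comm]
    _ ≤ F (F a) ⊓ F b := h4
    _ ≤ F b := inf_le_right
end

section
/- Let A be a generalized ultrametric semilattice with distance set P, let F : A → A be a contracting function, and let S be a set of post-fixed points of F. If S has a least upper bound s in (A, ⊑), then s is a post-fixed point of F, i.e., s ⊑ F(s). -/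
variable {A P : Type*} [SemilatticeInf A] [PartialOrder P] [OrderBot P]

theorem lub_of_postFixed_points_is_postFixed
    (S : GUSemilattice A P) (F : A → A)
    (hF : S.Contracting F)
    (T : Set A) (hT : ∀ a ∈ T, a ≤ F a)
    (s : A) (hs : IsLUB T s) :
    s ≤ F s := by
  have hub : ∀ a ∈ T, a ≤ s ⊓ F s := by
    intro a ha
    have has : a ≤ s := hs.1 ha
    have haFa : a ⊓ F a = a := inf_eq_left.mpr (hT a ha)
    -- d(a, a ⊓ F s) ≤ d(F a, F s) ≤ d(a, s)
    have h1 : S.d a (a ⊓ F s) ≤ S.d a s := by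
      calc S.d a (a ⊓ F s) = S.d (a ⊓ F a) (a ⊓ F s) := by rw [haFa]
        _ ≤ S.d (F a) (F s) := S.d_inf_inf_le a (F a) (F s)
        _ ≤ S.d a s := hF a s
    have h2 : a ⊓ s ≤ a ⊓ (a ⊓ F s) := S.inf_le_inf_of_d_le a (a ⊓ F s) s h1
    have h3 : a ≤ a ⊓ F s := by
      have : a ⊓ s = a := inf_eq_left.mpr has
      calc a = a ⊓ s := this.symm
        _ ≤ a ⊓ (a ⊓ F s) := h2
        _ ≤ a ⊓ F s := inf_le_right
    exact le_inf has (h3.trans inf_le_right)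
  exact (hs.2 hub).trans inf_le_right
end

section
/- Let A be a generalized ultrametric semilattice whose distance set P is totally ordered. If A is directed-complete, then A is spherically complete. -/
variable {A P : Type*} [SemilatticeInf A] [PartialOrder P] [OrderBot P]

/-- If `x ⊑ y ⊑ s` with `x ≠ y`, then `d x s ≤ d x y`. -/
private lemma GUS_L5 (S : GUSemilattice A P) (htot : ∀ p q : P, p ≤ q ∨ q ≤ p)
    {x y s : A} (hxy : x ≤ y) (hys : y ≤ s) (hne : x ≠ y) :
    S.d x s ≤ S.d x y := by
  have hsy : S.d s y ≤ S.d x y := by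
    by_contra hcon
    have h1 : S.d x y ≤ S.d s y := (htot _ _).resolve_left hcon
    have h2 : S.d s x ≤ S.d s y :=
      S.d_ultra s y x _ le_rfl (by rw [S.d_symm]; exact h1)
    have h3 : s ⊓ y ≤ s ⊓ x := S.inf_le_inf_of_d_le s x y h2
    rw [inf_eq_right.mpr hys, inf_eq_right.mpr (hxy.trans hys)] at h3
    exact hne (le_antisymm hxy h3)
  exact S.d_ultra x y s _ le_rfl (by rw [S.d_symm]; exact hsy)

theorem sphericallyComplete_of_directedComplete
    (S : GUSemilattice A P) (htot : ∀ p q : P, p ≤ q ∨ q ≤ p)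
    (hdc : DirectedComplete A) :
    S.SphericallyComplete := by
  classical
  intro C hCne hCchain hCball
  obtain ⟨B₀, hB₀⟩ := hCne
  obtain ⟨a₀, p₀, -⟩ := hCball B₀ hB₀
  haveI : Nonempty A := ⟨a₀⟩
  haveI : Nonempty P := ⟨p₀⟩
  choose! a radius hap using hCball
  have hmem : ∀ B ∈ C, ∀ z : A, z ∈ B ↔ S.d z (a B) ≤ radius B := by
    intro B hB z
    constructor
    · intro hz; rw [hap B hB] at hz; exact hz
    · intro hz; rw [hap B hB]; exact hz
  have hdself : ∀ z : A, S.d z z = ⊥ := fun z => (S.d_eq_bot_iff z z).mpr rfl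
  have hcen : ∀ B ∈ C, a B ∈ B := by
    intro B hB
    exact (hmem B hB _).mpr (by rw [hdself]; exact bot_le)
  have hboth : ∀ B ∈ C, ∀ y ∈ B, ∀ z ∈ B, S.d y z ≤ radius B := by
    intro B hB y hy z hz
    exact S.d_ultra y (a B) z (radius B) ((hmem B hB y).mp hy)
      (by rw [S.d_symm]; exact (hmem B hB z).mp hz)
  -- The key step lemma
  have hstep : ∀ B₀ ∈ C, ∀ x : Set A → A, (∀ B ∈ C, x B ∈ B) →
      (∀ B ∈ C, x B₀ ∈ B) ∨
      ∃ B₁ ∈ C, (x B₀ ⊓ x B₁) ∈ B₀ ∧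
        ∀ B ∈ C, ∃ B₂ ∈ C, x B₀ ⊓ x B₁ ≤ x B₂ ∧ x B₂ ∈ B := by
    intro B₀ hB₀ x hx
    by_cases h : ∃ B₁, B₁ ∈ C ∧ B₁ ⊆ B₀ ∧
        ∀ B'' ∈ C, B'' ⊆ B₁ → x B₀ ⊓ x B₁ ≤ x B₀ ⊓ x B''
    · right
      obtain ⟨B₁, hB₁, hB₁sub, hmin⟩ := h
      have hx₁B₀ : x B₁ ∈ B₀ := hB₁sub (hx B₁ hB₁)
      have hd1 : S.d (x B₀ ⊓ x B₁) (x B₀) ≤ radius B₀ := by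
        have h5 := S.d_inf_inf_le (x B₀) (x B₁) (x B₀)
        rw [inf_idem] at h5
        exact h5.trans (hboth B₀ hB₀ _ hx₁B₀ _ (hx B₀ hB₀))
      have hcB₀ : (x B₀ ⊓ x B₁) ∈ B₀ :=
        (hmem B₀ hB₀ _).mpr
          (S.d_ultra _ (x B₀) (a B₀) (radius B₀) hd1 ((hmem B₀ hB₀ _).mp (hx B₀ hB₀)))
      refine ⟨B₁, hB₁, hcB₀, ?_⟩
      intro B hB
      rcases eq_or_ne B B₀ with rfl | hne₀
      · exact ⟨B, hB, inf_le_left, hx B hB⟩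
      rcases hCchain hB hB₀ hne₀ with hBsub | hBsup
      · rcases eq_or_ne B B₁ with rfl | hne₁
        · exact ⟨B, hB, inf_le_right, hx B hB⟩
        rcases hCchain hB hB₁ hne₁ with hBB₁ | hB₁B
        · exact ⟨B, hB, (hmin B hB hBB₁).trans inf_le_right, hx B hB⟩
        · exact ⟨B₁, hB₁, inf_le_right, hB₁B (hx B₁ hB₁)⟩
      · exact ⟨B₀, hB₀, inf_le_left, hBsup (hx B₀ hB₀)⟩
    · left
      push_neg at h
      intro B hB
      rcases eq_or_ne B B₀ with rfl | hne₀
      · exact hx B hB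
      rcases hCchain hB hB₀ hne₀ with hBsub | hBsup
      · obtain ⟨B'', hB'', hB''sub, hnle⟩ := h B hB hBsub
        have hx'' : x B'' ∈ B := hB''sub (hx B'' hB'')
        have h1 : ¬ S.d (x B₀) (x B'') ≤ S.d (x B₀) (x B) := fun hle =>
          hnle (S.inf_le_inf_of_d_le (x B₀) (x B'') (x B) hle)
        have h3 : S.d (x B) (x B'') ≤ radius B := hboth B hB _ (hx B hB) _ hx''
        have h4 : S.d (x B₀) (x B'') ≤ radius B := by
          rcases htot (S.d (x B₀) (x B)) (S.d (x B) (x B'')) with hc | hc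
          · exact (S.d_ultra (x B₀) (x B) (x B'') _ hc le_rfl).trans h3
          · exact absurd (S.d_ultra (x B₀) (x B) (x B'') _ le_rfl hc) h1
        exact (hmem B hB _).mpr
          (S.d_ultra _ (x B'') (a B) _ h4 ((hmem B hB _).mp hx''))
      · exact hBsup (hx B₀ hB₀)
  have hacen : ∀ B ∈ C, a B ∈ B := hcen
  rcases hstep B₀ hB₀ a hacen with hall | ⟨B₁, hB₁, hc₀B₀, hInv₀⟩
  · exact ⟨a B₀, Set.mem_sInter.mpr hall⟩
  -- the Zorn setup
  set Pred : Set (Set A) × A → Prop := fun q =>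
    q.1 ⊆ C ∧ (∀ B ∈ q.1, ∀ B' ∈ C, B ⊆ B' → B' ∈ q.1) ∧
      (∀ B ∈ q.1, q.2 ∈ B) ∧ (∀ B ∈ C, ∃ y, y ∈ B ∧ q.2 ≤ y) with hPred
  set r : {q : Set (Set A) × A // Pred q} → {q : Set (Set A) × A // Pred q} → Prop :=
    fun q q' => q.val.1 ⊆ q'.val.1 ∧ q.val.2 ≤ q'.val.2 ∧
      ∀ B ∈ q.val.1, S.d q.val.2 q'.val.2 ≤ radius B with hr
  have htrans : ∀ {q1 q2 q3}, r q1 q2 → r q2 q3 → r q1 q3 := by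
    intro q1 q2 q3 h12 h23
    exact ⟨h12.1.trans h23.1, h12.2.1.trans h23.2.1, fun B hB =>
      S.d_ultra _ _ _ _ (h12.2.2 B hB) (h23.2.2 B (h12.1 hB))⟩
  -- base element
  have hq₀ : Pred ({B | B ∈ C ∧ B₀ ⊆ B}, a B₀ ⊓ a B₁) := by
    refine ⟨fun B hB => hB.1, ?_, ?_, ?_⟩
    · intro B hB B' hB' hBB'
      exact ⟨hB', hB.2.trans hBB'⟩
    · intro B hB
      exact hB.2 hc₀B₀
    · intro B hB
      obtain ⟨B₂, hB₂, hle, hmemB⟩ := hInv₀ B hB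
      exact ⟨a B₂, hmemB, hle⟩
  -- every r-chain is bounded
  have hbdd : ∀ c, IsChain r c → ∃ ub, ∀ q ∈ c, r q ub := by
    intro c hc
    rcases c.eq_empty_or_nonempty with rfl | ⟨q₀', hq₀'⟩
    · exact ⟨⟨_, hq₀⟩, fun q hq => absurd hq (Set.notMem_empty q)⟩
    set E : Set A := (fun q : {q : Set (Set A) × A // Pred q} => q.val.2) '' c with hE
    have hEchain : IsChain (· ≤ ·) E := by
      rintro _ ⟨q, hq, rfl⟩ _ ⟨q', hq', rfl⟩ hne
      have hqq' : q ≠ q' := fun h => hne (by rw [h])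
      exact (hc hq hq' hqq').imp (fun h => h.2.1) (fun h => h.2.1)
    obtain ⟨s, hs⟩ := hdc E ⟨q₀'.val.2, ⟨q₀', hq₀', rfl⟩⟩ hEchain.directedOn
    have key : ∀ q ∈ c, ∀ B ∈ q.val.1, S.d q.val.2 s ≤ radius B := by
      intro q hq B hB
      by_cases hex : ∃ q' ∈ c, q.val.2 ≤ q'.val.2 ∧ q.val.2 ≠ q'.val.2
      · obtain ⟨q', hq', hle, hne⟩ := hex
        have hqq' : q ≠ q' := fun h => hne (by rw [h])
        have hd : S.d q.val.2 q'.val.2 ≤ radius B := by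
          rcases hc hq hq' hqq' with hrel | hrel
          · exact hrel.2.2 B hB
          · exact absurd (le_antisymm hle hrel.2.1) hne
        have hq'le : q'.val.2 ≤ s := hs.1 ⟨q', hq', rfl⟩
        exact (GUS_L5 S htot hle hq'le hne).trans hd
      · push_neg at hex
        have hub : q.val.2 ∈ upperBounds E := by
          rintro _ ⟨q', hq', rfl⟩
          rcases eq_or_ne q q' with rfl | hqq'
          · exact le_rfl
          rcases hc hq hq' hqq' with hrel | hrel
          · exact le_of_eq (hex q' hq' hrel.2.1).symm
          · exact hrel.2.1
        have hsq : s = q.val.2 := le_antisymm (hs.2 hub) (hs.1 ⟨q, hq, rfl⟩)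
        have : S.d q.val.2 s = ⊥ := by rw [hsq]; exact hdself _
        rw [this]; exact bot_le
    have hPredub : Pred ({B | ∃ q, ∃ _ : q ∈ c, B ∈ q.val.1}, s) := by
      refine ⟨?_, ?_, ?_, ?_⟩
      · rintro B ⟨q, hq, hBq⟩
        exact q.prop.1 hBq
      · rintro B ⟨q, hq, hBq⟩ B' hB' hBB'
        exact ⟨q, hq, q.prop.2.1 B hBq B' hB' hBB'⟩
      · rintro B ⟨q, hq, hBq⟩
        have hBC : B ∈ C := q.prop.1 hBq
        have h1 : S.d s q.val.2 ≤ radius B := by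
          rw [S.d_symm]; exact key q hq B hBq
        exact (hmem B hBC s).mpr
          (S.d_ultra s q.val.2 (a B) _ h1 ((hmem B hBC _).mp (q.prop.2.2.1 B hBq)))
      · intro B hB
        have hw : ∀ q : {q : Set (Set A) × A // Pred q}, q ∈ c →
            ∃ y, y ∈ B ∧ q.val.2 ≤ y := fun q _ => q.prop.2.2.2 B hB
        choose w hwB hwle using hw
        by_cases hdist : ∃ q, ∃ hq : q ∈ c, S.d s (w q hq) ≤ radius B
        · obtain ⟨q, hq, hds⟩ := hdist
          refine ⟨s, ?_, le_rfl⟩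
          exact (hmem B hB s).mpr
            (S.d_ultra s (w q hq) (a B) _ hds ((hmem B hB _).mp (hwB q hq)))
        · push_neg at hdist
          have hconst : ∀ q (hq : q ∈ c) q' (hq' : q' ∈ c),
              s ⊓ w q hq = s ⊓ w q' hq' := by
            have haux : ∀ q (hq : q ∈ c) q' (hq' : q' ∈ c),
                S.d s (w q' hq') ≤ S.d s (w q hq) := by
              intro q hq q' hq'
              have hww : S.d (w q hq) (w q' hq') ≤ radius B :=
                hboth B hB _ (hwB q hq) _ (hwB q' hq')
              rcases htot (S.d (w q hq) (w q' hq')) (S.d s (w q hq)) with hcc | hcc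
              · exact S.d_ultra s (w q hq) (w q' hq') _ le_rfl hcc
              · exact absurd (hcc.trans hww) (hdist q hq)
            intro q hq q' hq'
            exact le_antisymm
              (S.inf_le_inf_of_d_le s (w q' hq') (w q hq) (haux q hq q' hq'))
              (S.inf_le_inf_of_d_le s (w q hq) (w q' hq') (haux q' hq' q hq))
          have hub : s ⊓ w q₀' hq₀' ∈ upperBounds E := by
            rintro _ ⟨q, hq, rfl⟩
            rw [← hconst q hq q₀' hq₀']
            exact le_inf (hs.1 ⟨q, hq, rfl⟩) (hwle q hq)
          exact ⟨w q₀' hq₀', hwB q₀' hq₀', (hs.2 hub).trans inf_le_right⟩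
    refine ⟨⟨_, hPredub⟩, fun q hq => ?_⟩
    exact ⟨fun B hB => ⟨q, hq, hB⟩, hs.1 ⟨q, hq, rfl⟩, key q hq⟩
  obtain ⟨m, hm⟩ := exists_maximal_of_chains_bounded hbdd htrans
  by_cases hfull : C ⊆ m.val.1
  · exact ⟨m.val.2, Set.mem_sInter.mpr fun B hB => m.prop.2.2.1 B (hfull hB)⟩
  exfalso
  obtain ⟨B₀', hB₀'C, hB₀'m⟩ := Set.not_subset.mp hfull
  have hw : ∀ B, B ∈ C → ∃ y, y ∈ B ∧ m.val.2 ≤ y := fun B hB => m.prop.2.2.2 B hB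
  choose! x hxB hxle using hw
  rcases hstep B₀' hB₀'C x hxB with hall | ⟨B₁', hB₁', hcB₀', hInv'⟩
  · -- x B₀' is in every ball; in particular in all of m.val.1, contradicting maximality
    have hPrednew : Pred (C, x B₀') := by
      refine ⟨subset_rfl, fun B _ B' hB' _ => hB', fun B hB => hall B hB, ?_⟩
      intro B hB
      exact ⟨x B₀', hall B hB, le_rfl⟩
    have hrel : r m ⟨(C, x B₀'), hPrednew⟩ := by
      refine ⟨m.prop.1, hxle B₀' hB₀'C, ?_⟩
      intro B hB
      exact hboth B (m.prop.1 hB) _ (m.prop.2.2.1 B hB) _ (hall B (m.prop.1 hB))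
    have := (hm _ hrel).1
    exact hB₀'m (this hB₀'C)
  · have hB₀'subs : ∀ B ∈ m.val.1, B₀' ⊆ B := by
      intro B hBm
      rcases eq_or_ne B₀' B with rfl | hne
      · exact absurd hBm hB₀'m
      rcases hCchain hB₀'C (m.prop.1 hBm) hne with hsub | hsup
      · exact hsub
      · exact absurd (m.prop.2.1 B hBm B₀' hB₀'C hsup) hB₀'m
    have hPrednew : Pred (m.val.1 ∪ {B | B ∈ C ∧ B₀' ⊆ B}, x B₀' ⊓ x B₁') := by
      refine ⟨?_, ?_, ?_, ?_⟩
      · rintro B (hBm | hBn)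
        · exact m.prop.1 hBm
        · exact hBn.1
      · rintro B (hBm | hBn) B' hB' hBB'
        · exact Or.inl (m.prop.2.1 B hBm B' hB' hBB')
        · exact Or.inr ⟨hB', hBn.2.trans hBB'⟩
      · rintro B (hBm | hBn)
        · exact (hB₀'subs B hBm) hcB₀'
        · exact hBn.2 hcB₀'
      · intro B hB
        obtain ⟨B₂, hB₂, hle, hmemB⟩ := hInv' B hB
        exact ⟨x B₂, hmemB, hle⟩
    have hrel : r m ⟨_, hPrednew⟩ := by
      refine ⟨Set.subset_union_left, le_inf (hxle B₀' hB₀'C) (hxle B₁' hB₁'), ?_⟩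
      intro B hB
      exact hboth B (m.prop.1 hB) _ (m.prop.2.2.1 B hB) _ ((hB₀'subs B hB) hcB₀')
    have := (hm _ hrel).1
    exact hB₀'m ((this (Or.inr ⟨hB₀'C, subset_rfl⟩)) : B₀' ∈ m.val.1)
end

section
/- Let A be a directed-complete generalized ultrametric semilattice with distance set P, let F : A → A be contracting, let a be a post-fixed point of F, and let g be a function from ordinals to A such that g(0) = a, g(α+1) = F(g(α)) ⊓ F(F(g(α))) for every ordinal α, and for every limit ordinal λ, g(λ) is a least upper bound of {g(β) : β < λ} in (A, ⊑). Then for every ordinal α: (1) g(α) ⊑ F(g(α)), and (2) for every ordinal β < α, g(β) ⊑ g(α). -/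
variable {A P : Type*} [SemilatticeInf A] [PartialOrder P] [OrderBot P]

/-! The key fact is that a post-fixed point `b` of a contracting `F` stays below `F s` for every
`s ⊒ b`: axiom (v) gives `d(b ⊓ F s, b) ≤ d(F s, F b) ≤ d(s, b) = d(b, b ⊓ s)`, and axiom (iv)
turns this into `b = b ⊓ s ⊑ b ⊓ F s`. Hence suprema of post-fixed points are post-fixed, and
`g` climbs at successor steps; post-fixedness of `F b ⊓ F (F b)` is a second application of
axiom (iv), at `F (F b)`. -/

namespace GUSemilattice.Contracting

variable {S : GUSemilattice A P} {F : A → A}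

lemma le_apply_of_le (hF : S.Contracting F) {b s : A} (hb : b ≤ F b) (hbs : b ≤ s) :
    b ≤ F s := by
  have hdist : S.d b (b ⊓ F s) ≤ S.d b s := by
    calc S.d b (b ⊓ F s) = S.d (b ⊓ F s) (b ⊓ F b) := by rw [inf_eq_left.mpr hb, S.d_symm]
      _ ≤ S.d (F s) (F b) := S.d_inf_inf_le b (F s) (F b)
      _ ≤ S.d s b := hF s b
      _ = S.d b s := S.d_symm s b
  calc b = b ⊓ s := (inf_eq_left.mpr hbs).symm
    _ ≤ b ⊓ (b ⊓ F s) := S.inf_le_inf_of_d_le b (b ⊓ F s) s hdist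
    _ ≤ F s := inf_le_right.trans inf_le_right

lemma le_inf_apply_apply (hF : S.Contracting F) {b : A} (hb : b ≤ F b) :
    b ≤ F b ⊓ F (F b) :=
  le_inf hb (hF.le_apply_of_le hb hb)

lemma inf_apply_apply_le_apply (hF : S.Contracting F) (b : A) :
    F b ⊓ F (F b) ≤ F (F b ⊓ F (F b)) := by
  have hdist : S.d (F (F b)) (F (F b ⊓ F (F b))) ≤ S.d (F (F b)) (F b) := by
    calc S.d (F (F b)) (F (F b ⊓ F (F b)))
        = S.d (F (F b ⊓ F (F b))) (F (F b)) := S.d_symm _ _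
      _ ≤ S.d (F b ⊓ F (F b)) (F b ⊓ F b) := by rw [inf_idem]; exact hF _ _
      _ ≤ S.d (F (F b)) (F b) := S.d_inf_inf_le (F b) (F (F b)) (F b)
  calc F b ⊓ F (F b) = F (F b) ⊓ F b := inf_comm _ _
    _ ≤ F (F b) ⊓ F (F b ⊓ F (F b)) := S.inf_le_inf_of_d_le _ _ _ hdist
    _ ≤ F (F b ⊓ F (F b)) := inf_le_right

lemma le_apply_of_isLUB (hF : S.Contracting F) {D : Set A} {s : A}
    (hD : ∀ b ∈ D, b ≤ F b) (hs : IsLUB D s) : s ≤ F s :=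
  hs.2 fun b hb => hF.le_apply_of_le (hD b hb) (hs.1 hb)

end GUSemilattice.Contracting

theorem transfinite_iteration_postFixed_and_monotone_general
    (S : GUSemilattice A P)
    (F : A → A) (hF : S.Contracting F)
    (a : A) (ha : a ≤ F a)
    (g : Ordinal → A)
    (hg0 : g 0 = a)
    (hgsucc : ∀ α : Ordinal, g (α + 1) = F (g α) ⊓ F (F (g α)))
    (hglim : ∀ l : Ordinal, Order.IsSuccLimit l → IsLUB (g '' Set.Iio l) (g l)) :
    ∀ α : Ordinal, g α ≤ F (g α) ∧ ∀ β : Ordinal, β < α → g β ≤ g α := by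
  intro α
  induction α using Ordinal.limitRecOn with
  | zero => exact ⟨hg0 ▸ ha, fun β hβ => (not_lt_zero hβ).elim⟩
  | add_one γ ih =>
    obtain ⟨hpost, hmono⟩ := ih
    have hstep : g γ ≤ g (γ + 1) := hgsucc γ ▸ hF.le_inf_apply_apply hpost
    refine ⟨hgsucc γ ▸ hF.inf_apply_apply_le_apply (g γ), fun β hβ => ?_⟩
    rcases (Order.lt_add_one_iff.mp hβ).eq_or_lt with rfl | hβγ
    · exact hstep
    · exact (hmono β hβγ).trans hstep
  | limit l hl ih =>
    have hmono : ∀ β < l, g β ≤ g l := fun β hβ => (hglim l hl).1 ⟨β, hβ, rfl⟩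
    refine ⟨hF.le_apply_of_isLUB ?_ (hglim l hl), hmono⟩
    rintro _ ⟨β, hβ, rfl⟩
    exact (ih β hβ).1

theorem transfinite_iteration_postFixed_and_monotone
    (S : GUSemilattice A P) (hdc : DirectedComplete A)
    (F : A → A) (hF : S.Contracting F)
    (a : A) (ha : a ≤ F a)
    (g : Ordinal → A)
    (hg0 : g 0 = a)
    (hgsucc : ∀ α : Ordinal, g (α + 1) = F (g α) ⊓ F (F (g α)))
    (hglim : ∀ l : Ordinal, Order.IsSuccLimit l → IsLUB (g '' Set.Iio l) (g l)) :
    ∀ α : Ordinal, g α ≤ F (g α) ∧ ∀ β : Ordinal, β < α → g β ≤ g α :=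
  transfinite_iteration_postFixed_and_monotone_general S F hF a ha g hg0 hgsucc hglim
end

section
/- Let A be a generalized ultrametric semilattice with distance set P, and let F : A → A be strictly contracting on orbits. Then for every a ∈ A, a is a fixed point of F (i.e., F(a) = a) if and only if a is a fixed point of the map x ↦ F(x) ⊓ F(F(x)) (i.e., F(a) ⊓ F(F(a)) = a). -/
variable {A P : Type*} [SemilatticeInf A] [PartialOrder P] [OrderBot P]

theorem fixedPoint_iff_fixedPoint_of_inf_map
    (S : GUSemilattice A P) (F : A → A)
    (hF : S.StrictlyContractingOnOrbits F) (a : A) :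
    F a = a ↔ F a ⊓ F (F a) = a := by
  constructor
  · intro h; simp [h]
  · intro h
    by_contra hne
    have hne' : a ≠ F a := fun e => hne e.symm
    have hlt := hF a hne'
    have h1 : S.d a (F a) ≤ S.d (F (F a)) (F a) := by
      calc S.d a (F a) = S.d (F a ⊓ F (F a)) (F a ⊓ F a) := by rw [h, inf_idem]
        _ ≤ S.d (F (F a)) (F a) := S.d_inf_inf_le _ _ _
    rw [S.d_symm (F (F a)) (F a)] at h1
    exact absurd (lt_of_le_of_lt h1 hlt) (lt_irrefl _)
end

section
/- Let A be a directed-complete generalized ultrametric semilattice with distance set P, let F : A → A be contracting and strictly contracting on orbits, let a be a post-fixed point of F, and let g be a function from ordinals to A such that g(0) = a, g(α+1) = F(g(α)) ⊓ F(F(g(α))) for every ordinal α, and for every limit ordinal λ, g(λ) is a least upper bound of {g(β) : β < λ} in (A, ⊑). Let κ be an ordinal such that there is no strictly order-preserving map from the ordinals below κ into (A, ⊑) (i.e., no function φ from {β : β < κ} to A with φ(β) ⊑ φ(γ) and φ(β) ≠ φ(γ) whenever β < γ < κ). Then g(κ) is a fixed point of F, i.e., F(g(κ)) = g(κ). -/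
variable {A P : Type*} [SemilatticeInf A] [PartialOrder P] [OrderBot P]

section Auxiliary

variable (S : GUSemilattice A P)


/-! Every iterate is a post-fixed point, so the iteration is increasing. As there is no strictly
increasing `κ`-sequence, it stalls below `κ` at some `b = F b ⊓ F (F b)`; then
`d(b, F b) ≤ d(F b, F (F b))`, which strict contraction on orbits only allows when `F b = b`,
and from there on the iteration is constant. -/

namespace GUSemilattice

variable (S : GUSemilattice A P) {F : A → A}

lemma d_le_d_of_le_of_le {x m u : A} (hxm : x ≤ m) (hmu : m ≤ u) : S.d x m ≤ S.d x u := by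
  have h := S.d_inf_inf_le m x u
  rwa [inf_eq_right.mpr hxm, inf_eq_left.mpr hmu] at h

lemma le_inf_apply_apply (hF : S.Contracting F) {b : A} (hb : b ≤ F b) :
    b ≤ F b ⊓ F (F b) := by
  have hd : S.d (F b) (F (F b)) ≤ S.d (F b) b := S.d_symm b (F b) ▸ hF b (F b)
  calc b = F b ⊓ b := (inf_eq_right.mpr hb).symm
    _ ≤ F b ⊓ F (F b) := S.inf_le_inf_of_d_le _ _ _ hd

lemma inf_apply_apply_le_apply (hF : S.Contracting F) (b : A) :
    F b ⊓ F (F b) ≤ F (F b ⊓ F (F b)) := by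
  set c := F b ⊓ F (F b)
  have hc : S.d c (F b) ≤ S.d (F (F b)) (F b) := by
    simpa only [inf_idem] using S.d_inf_inf_le (F b) (F (F b)) (F b)
  have hFc : S.d (F (F b)) (F c) ≤ S.d (F (F b)) (F b) :=
    S.d_symm (F c) (F (F b)) ▸ (hF c (F b)).trans hc
  calc c = F (F b) ⊓ F b := inf_comm _ _
    _ ≤ F (F b) ⊓ F c := S.inf_le_inf_of_d_le _ _ _ hFc
    _ ≤ F c := inf_le_right

lemma le_apply_of_isLUB (hF : S.Contracting F) {D : Set A} {s : A} (hs : IsLUB D s)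
    (hD : ∀ b ∈ D, b ≤ F b) : s ≤ F s := by
  suffices hub : ∀ b ∈ D, b ≤ s ⊓ F s from (hs.2 hub).trans inf_le_right
  intro b hb
  have hbs : b ≤ s := hs.1 hb
  -- `s ⊓ F b` lies between `b` and `s`, and is as close to `s ⊓ F s` as `b` is to `s`
  have h₁ : S.d b (s ⊓ F b) ≤ S.d b s := S.d_le_d_of_le_of_le (le_inf hbs (hD b hb)) inf_le_left
  have h₂ : S.d (s ⊓ F b) (s ⊓ F s) ≤ S.d b s := (S.d_inf_inf_le s (F b) (F s)).trans (hF b s)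
  have h := S.inf_le_inf_of_d_le b (s ⊓ F s) s (S.d_ultra _ _ _ _ h₁ h₂)
  rw [inf_eq_left.mpr hbs] at h
  exact h.trans inf_le_right

lemma apply_eq_of_inf_apply_apply_eq (hFo : S.StrictlyContractingOnOrbits F) {b : A}
    (hb : F b ⊓ F (F b) = b) : F b = b := by
  by_contra hne
  have hd : S.d b (F b) ≤ S.d (F b) (F (F b)) := by
    have h := S.d_inf_inf_le (F b) (F (F b)) (F b)
    rwa [inf_idem, hb, S.d_symm (F (F b))] at h
  exact (hd.trans_lt (hFo b (Ne.symm hne))).false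

end GUSemilattice

section OrdinalIteration

variable {X : Type*} [Preorder X]

structure IsOrdinalIteration (T : X → X) (g : Ordinal → X) : Prop where
  succ : ∀ α, g (α + 1) = T (g α)
  isLUB_of_isSuccLimit : ∀ l, Order.IsSuccLimit l → IsLUB (g '' Set.Iio l) (g l)

namespace IsOrdinalIteration

variable {T : X → X} {g : Ordinal → X}

lemma forall_of_closed (hg : IsOrdinalIteration T g) {Q : X → Prop} (h0 : Q (g 0))
    (hT : ∀ x, Q x → Q (T x)) (hlub : ∀ D s, IsLUB D s → (∀ x ∈ D, Q x) → Q s) (α : Ordinal) :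
    Q (g α) := by
  induction α using WellFoundedLT.induction with
  | _ α IH =>
    rcases Ordinal.zero_or_succ_or_isSuccLimit α with rfl | ⟨β, rfl⟩ | hl
    · exact h0
    · rw [Order.succ_eq_add_one, hg.succ]
      exact hT _ (IH β (Order.lt_succ β))
    · refine hlub _ _ (hg.isLUB_of_isSuccLimit α hl) ?_
      rintro _ ⟨β, hβ, rfl⟩
      exact IH β hβ

lemma monotone (hg : IsOrdinalIteration T g) (hT : ∀ α, g α ≤ T (g α)) : Monotone g := by
  intro β γ hβγ
  induction γ using WellFoundedLT.induction with
  | _ γ IH =>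
    rcases hβγ.eq_or_lt with rfl | hlt
    · exact le_rfl
    rcases Ordinal.zero_or_succ_or_isSuccLimit γ with rfl | ⟨ε, rfl⟩ | hl
    · simp at hlt
    · rw [Order.succ_eq_add_one, hg.succ]
      exact (IH ε (Order.lt_succ ε) (Order.lt_succ_iff.mp hlt)).trans (hT ε)
    · exact (hg.isLUB_of_isSuccLimit γ hl).1 ⟨β, hlt, rfl⟩

end IsOrdinalIteration

end OrdinalIteration

namespace IsOrdinalIteration

variable {X : Type*} [PartialOrder X] {T : X → X} {g : Ordinal → X}

lemma eq_of_succ_eq_of_le (hg : IsOrdinalIteration T g) (hmono : Monotone g) {β : Ordinal}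
    (hβ : g (β + 1) = g β) {δ : Ordinal} (hβδ : β ≤ δ) : g δ = g β := by
  have hfix : T (g β) = g β := (hg.succ β).symm.trans hβ
  induction δ using WellFoundedLT.induction with
  | _ δ IH =>
    rcases hβδ.eq_or_lt with rfl | hlt
    · rfl
    rcases Ordinal.zero_or_succ_or_isSuccLimit δ with rfl | ⟨ε, rfl⟩ | hl
    · simp at hlt
    · rw [Order.succ_eq_add_one, hg.succ, IH ε (Order.lt_succ ε) (Order.lt_succ_iff.mp hlt), hfix]
    · refine le_antisymm ((hg.isLUB_of_isSuccLimit δ hl).2 ?_) (hmono hβδ)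
      rintro _ ⟨ε, hε, rfl⟩
      rcases le_total ε β with hεβ | hβε
      · exact hmono hεβ
      · exact (IH ε hε hβε).le

end IsOrdinalIteration

theorem transfinite_iteration_reaches_fixedPoint_general
    (S : GUSemilattice A P)
    (F : A → A) (hF : S.Contracting F)
    (hFo : S.StrictlyContractingOnOrbits F)
    (a : A) (ha : a ≤ F a)
    (g : Ordinal → A)
    (hg0 : g 0 = a)
    (hgsucc : ∀ α : Ordinal, g (α + 1) = F (g α) ⊓ F (F (g α)))
    (hglim : ∀ l : Ordinal, Order.IsSuccLimit l → IsLUB (g '' Set.Iio l) (g l))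
    (κ : Ordinal)
    (hκ : ¬ ∃ φ : Ordinal → A,
      ∀ β γ : Ordinal, β < γ → γ < κ → φ β ≤ φ γ ∧ φ β ≠ φ γ) :
    F (g κ) = g κ := by
  have hg : IsOrdinalIteration (fun b => F b ⊓ F (F b)) g := ⟨hgsucc, hglim⟩
  have post : ∀ α, g α ≤ F (g α) :=
    hg.forall_of_closed (hg0 ▸ ha) (fun x _ => S.inf_apply_apply_le_apply hF x)
      (fun _ _ hs hD => S.le_apply_of_isLUB hF hs hD)
  have hmono : Monotone g := hg.monotone fun α => S.le_inf_apply_apply hF (post α)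
  obtain ⟨β, γ, hβγ, hγκ, hgβγ⟩ : ∃ β γ, β < γ ∧ γ < κ ∧ g β = g γ := by
    by_contra! h
    exact hκ ⟨g, fun β γ hβγ hγκ => ⟨hmono hβγ.le, h β γ hβγ hγκ⟩⟩
  have hstall : g (β + 1) = g β :=
    le_antisymm ((hmono (Order.add_one_le_of_lt hβγ)).trans hgβγ.ge) (hmono le_self_add)
  rw [hg.eq_of_succ_eq_of_le hmono hstall (hβγ.trans hγκ).le]
  exact S.apply_eq_of_inf_apply_apply_eq hFo ((hgsucc β).symm.trans hstall)

theorem transfinite_iteration_reaches_fixedPoint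
    (S : GUSemilattice A P) (hdc : DirectedComplete A)
    (F : A → A) (hF : S.Contracting F)
    (hFo : S.StrictlyContractingOnOrbits F)
    (a : A) (ha : a ≤ F a)
    (g : Ordinal → A)
    (hg0 : g 0 = a)
    (hgsucc : ∀ α : Ordinal, g (α + 1) = F (g α) ⊓ F (F (g α)))
    (hglim : ∀ l : Ordinal, Order.IsSuccLimit l → IsLUB (g '' Set.Iio l) (g l))
    (κ : Ordinal)
    (hκ : ¬ ∃ φ : Ordinal → A,
      ∀ β γ : Ordinal, β < γ → γ < κ → φ β ≤ φ γ ∧ φ β ≠ φ γ) :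
    F (g κ) = g κ :=
  transfinite_iteration_reaches_fixedPoint_general S F hF hFo a ha g hg0 hgsucc hglim κ hκ
end Auxiliary
end

section
/- Let A be a directed-complete generalized ultrametric semilattice with distance set P, let F : A → A be strictly contracting, and let x ∈ A be the unique fixed point of F. For any a ∈ A, let g be a function from ordinals to A such that g(0) = F(a) ⊓ F(F(a)), g(α+1) = F(g(α)) ⊓ F(F(g(α))) for every ordinal α, and for every limit ordinal λ, g(λ) is a least upper bound of {g(β) : β < λ} in (A, ⊑). Then for every ordinal κ such that there is no strictly order-preserving map from the ordinals below κ into (A, ⊑), one has g(κ) = x. -/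
variable {A P : Type*} [SemilatticeInf A] [PartialOrder P] [OrderBot P]

/-! Let `T b = F b ⊓ F (F b)` (`infStep F`). For contracting `F` one has `T c ≤ T (T c)`, and the
inequality `b ≤ T b` passes to suprema of the iteration, so the transfinite iteration of `T` is
monotone. Below an ordinal `κ` admitting no strictly order-preserving map into `A` it must therefore
stall, `g β = g (β + 1) = T (g β)`; strict contraction turns this fixed point of `T` into the fixed
point of `F`, and from `β` on the iteration is constant. -/

open Function Order Set

def infStep (F : A → A) (b : A) : A := F b ⊓ F (F b)

namespace GUSemilattice

variable (S : GUSemilattice A P) {F G : A → A}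

lemma d_self (a : A) : S.d a a = ⊥ := (S.d_eq_bot_iff a a).2 rfl

lemma d_mono_right {u v w : A} (huv : u ≤ v) (hvw : v ≤ w) : S.d u v ≤ S.d u w := by
  simpa only [inf_eq_right.mpr huv, inf_eq_left.mpr hvw] using S.d_inf_inf_le v u w

lemma d_anti_left {u v w : A} (huv : u ≤ v) (hvw : v ≤ w) : S.d v w ≤ S.d u w :=
  S.d_ultra v u w _ (S.d_symm v u ▸ S.d_mono_right huv hvw) le_rfl

lemma inf_le_of_d_le {a y z : A} (h : S.d a y ≤ S.d a z) : a ⊓ z ≤ y :=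
  (S.inf_le_inf_of_d_le a y z h).trans inf_le_right

variable {S}

lemma StrictlyContracting.contracting (hF : S.StrictlyContracting F) : S.Contracting F := by
  intro a₁ a₂
  rcases eq_or_ne a₁ a₂ with rfl | hne
  · simp only [d_self, le_refl]
  · exact (hF a₁ a₂ hne).le

lemma StrictlyContracting.strictlyContractingOnOrbits (hF : S.StrictlyContracting F) :
    S.StrictlyContractingOnOrbits F :=
  fun a ha => hF a (F a) ha

lemma Contracting.comp (hF : S.Contracting F) (hG : S.Contracting G) : S.Contracting (F ∘ G) :=
  fun a₁ a₂ => (hF (G a₁) (G a₂)).trans (hG a₁ a₂)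

lemma StrictlyContractingOnOrbits.isFixedPt_of_isFixedPt_infStep
    (hF : S.StrictlyContractingOnOrbits F) {b : A} (hb : IsFixedPt (infStep F) b) :
    IsFixedPt F b := by
  by_contra hne
  have hle : S.d b (F b) ≤ S.d (F (F b)) (F b) := by
    have h := S.d_inf_inf_le (F b) (F (F b)) (F b)
    rwa [inf_idem, show F b ⊓ F (F b) = b from hb] at h
  rw [S.d_symm (F (F b))] at hle
  exact (hle.trans_lt (hF b (Ne.symm hne))).false

lemma StrictlyContracting.eq_of_isFixedPt_infStep (hF : S.StrictlyContracting F) {x b : A}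
    (hx : IsFixedPt F x) (hb : IsFixedPt (infStep F) b) : b = x := by
  have hFb := hF.strictlyContractingOnOrbits.isFixedPt_of_isFixedPt_infStep hb
  by_contra hne
  simpa only [hFb.eq, hx.eq, lt_self_iff_false] using hF b x hne

/-- All of `T c`, `F (T c)` and `F (F (T c))` lie in the ball of radius `d (F c) (F (F c))`
around `F c`, which by axiom (iv) puts `T c = F c ⊓ F (F c)` below the last two. -/
lemma Contracting.infStep_le_infStep_infStep (hF : S.Contracting F) (c : A) :
    infStep F c ≤ infStep F (infStep F c) := by
  set u := infStep F c
  set r := S.d (F c) (F (F c))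
  have hu : S.d (F c) u ≤ r := by
    have h := S.d_inf_inf_le (F c) (F c) (F (F c))
    rw [inf_idem] at h
    exact h
  have hFu : S.d (F c) (F u) ≤ r := S.d_ultra _ (F (F c)) _ _ le_rfl ((hF _ _).trans hu)
  have hu_Fu : S.d u (F u) ≤ r := S.d_ultra _ (F c) _ _ (S.d_symm u _ ▸ hu) hFu
  have hFFu : S.d (F c) (F (F u)) ≤ r := S.d_ultra _ (F u) _ _ hFu ((hF _ _).trans hu_Fu)
  exact le_inf (S.inf_le_of_d_le hFu) (S.inf_le_of_d_le hFFu)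

lemma Contracting.le_apply_of_le_of_le_apply (hG : S.Contracting G) {b b' s : A}
    (hbb' : b ≤ b') (hb's : b' ≤ s) (hb'G : b' ≤ G b) : b ≤ G s := by
  have hmid : S.d b' (s ⊓ G b) ≤ S.d b s :=
    (S.d_mono_right (le_inf hb's hb'G) inf_le_left).trans (S.d_anti_left hbb' hb's)
  have hshift : S.d (s ⊓ G b) (s ⊓ G s) ≤ S.d b s := (S.d_inf_inf_le s _ _).trans (hG b s)
  have hclose : S.d b (s ⊓ G s) ≤ S.d b s :=
    S.d_ultra _ b' _ _ (S.d_mono_right hbb' hb's) (S.d_ultra _ _ _ _ hmid hshift)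
  calc b = b ⊓ s := (inf_eq_left.mpr (hbb'.trans hb's)).symm
    _ ≤ s ⊓ G s := S.inf_le_of_d_le hclose
    _ ≤ G s := inf_le_right

lemma Contracting.le_infStep_of_isLUB (hF : S.Contracting F) {D : Set A} {s : A}
    (hs : IsLUB D s) (hD : ∀ b ∈ D, ∃ b' ∈ D, b ≤ b' ∧ b' ≤ infStep F b) :
    s ≤ infStep F s := by
  refine hs.2 fun b hb => ?_
  obtain ⟨b', hb'D, hbb', hb'T⟩ := hD b hb
  exact le_inf (hF.le_apply_of_le_of_le_apply hbb' (hs.1 hb'D) (hb'T.trans inf_le_left))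
    ((hF.comp hF).le_apply_of_le_of_le_apply hbb' (hs.1 hb'D) (hb'T.trans inf_le_right))

end GUSemilattice

namespace Ordinal

variable {A : Type*} [PartialOrder A] {g : Ordinal → A}

lemma monotone_of_le_add_one_of_isLUB (hstep : ∀ α, g α ≤ g (α + 1))
    (hlim : ∀ l, IsSuccLimit l → IsLUB (g '' Iio l) (g l)) : Monotone g := by
  intro β γ hβγ
  induction γ using Ordinal.limitRecOn with
  | zero => rw [nonpos_iff_eq_zero.mp hβγ]
  | add_one γ ih =>
    rcases hβγ.eq_or_lt with rfl | hlt
    · exact le_rfl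
    · exact (ih (lt_add_one_iff.mp hlt)).trans (hstep γ)
  | limit l hl _ =>
    rcases hβγ.eq_or_lt with rfl | hlt
    · exact le_rfl
    · exact (hlim l hl).1 ⟨β, hlt, rfl⟩

lemma exists_lt_apply_add_one_eq (hg : Monotone g) {κ : Ordinal}
    (hκ : ¬ ∃ φ : Ordinal → A, ∀ β γ : Ordinal, β < γ → γ < κ → φ β ≤ φ γ ∧ φ β ≠ φ γ) :
    ∃ β < κ, g (β + 1) = g β := by
  obtain ⟨β, γ, hβγ, hγκ, heq⟩ : ∃ β γ, β < γ ∧ γ < κ ∧ g β = g γ := by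
    by_contra! hinj
    exact hκ ⟨g, fun β γ hβγ hγκ => ⟨hg hβγ.le, hinj β γ hβγ hγκ⟩⟩
  refine ⟨β, hβγ.trans hγκ, le_antisymm ?_ (hg le_self_add)⟩
  exact heq ▸ hg (add_one_le_iff.mpr hβγ)

lemma apply_eq_of_isFixedPt_of_le {T : A → A} (hg : Monotone g)
    (hsucc : ∀ α, g (α + 1) = T (g α))
    (hlim : ∀ l, IsSuccLimit l → IsLUB (g '' Iio l) (g l))
    {β : Ordinal} (hβ : IsFixedPt T (g β)) {δ : Ordinal} (hβδ : β ≤ δ) : g δ = g β := by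
  induction δ using Ordinal.limitRecOn with
  | zero => rw [nonpos_iff_eq_zero.mp hβδ]
  | add_one δ ih =>
    rcases hβδ.eq_or_lt with rfl | hlt
    · rfl
    · rw [hsucc, ih (lt_add_one_iff.mp hlt), hβ.eq]
  | limit l hl ih =>
    rcases hβδ.eq_or_lt with rfl | hlt
    · rfl
    refine le_antisymm ((hlim l hl).2 ?_) ((hlim l hl).1 ⟨β, hlt, rfl⟩)
    rintro _ ⟨ε, hεl, rfl⟩
    rcases le_total β ε with hβε | hεβ
    · exact (ih ε hεl hβε).le
    · exact hg hεβ

end Ordinal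

theorem transfinite_iteration_computes_the_fixedPoint_general
    (S : GUSemilattice A P)
    (F : A → A) (hF : S.StrictlyContracting F)
    (x : A) (hx : F x = x)
    (a : A)
    (g : Ordinal → A)
    (hg0 : g 0 = F a ⊓ F (F a))
    (hgsucc : ∀ α : Ordinal, g (α + 1) = F (g α) ⊓ F (F (g α)))
    (hglim : ∀ l : Ordinal, Order.IsSuccLimit l → IsLUB (g '' Set.Iio l) (g l))
    (κ : Ordinal)
    (hκ : ¬ ∃ φ : Ordinal → A,
      ∀ β γ : Ordinal, β < γ → γ < κ → φ β ≤ φ γ ∧ φ β ≠ φ γ) :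
    g κ = x := by
  have hstep : ∀ α, g α ≤ g (α + 1) := by
    intro α
    induction α using Ordinal.limitRecOn with
    | zero => rw [hgsucc, hg0]; exact hF.contracting.infStep_le_infStep_infStep a
    | add_one α _ =>
      rw [hgsucc (α + 1), hgsucc α]; exact hF.contracting.infStep_le_infStep_infStep (g α)
    | limit l hl ih =>
      rw [hgsucc]
      refine hF.contracting.le_infStep_of_isLUB (hglim l hl) ?_
      rintro _ ⟨δ, hδl, rfl⟩
      exact ⟨g (δ + 1), ⟨δ + 1, hl.add_one_lt hδl, rfl⟩, ih δ hδl, (hgsucc δ).le⟩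
  have hmono := Ordinal.monotone_of_le_add_one_of_isLUB hstep hglim
  obtain ⟨β, hβκ, hβ⟩ := Ordinal.exists_lt_apply_add_one_eq hmono hκ
  have hfix : IsFixedPt (infStep F) (g β) := (hgsucc β).symm.trans hβ
  rw [Ordinal.apply_eq_of_isFixedPt_of_le hmono hgsucc hglim hfix hβκ.le,
    hF.eq_of_isFixedPt_infStep hx hfix]

theorem transfinite_iteration_computes_the_fixedPoint
    (S : GUSemilattice A P) (hdc : DirectedComplete A)
    (F : A → A) (hF : S.StrictlyContracting F)
    (x : A) (hx : F x = x)
    (a : A)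
    (g : Ordinal → A)
    (hg0 : g 0 = F a ⊓ F (F a))
    (hgsucc : ∀ α : Ordinal, g (α + 1) = F (g α) ⊓ F (F (g α)))
    (hglim : ∀ l : Ordinal, Order.IsSuccLimit l → IsLUB (g '' Set.Iio l) (g l))
    (κ : Ordinal)
    (hκ : ¬ ∃ φ : Ordinal → A,
      ∀ β γ : Ordinal, β < γ → γ < κ → φ β ≤ φ γ ∧ φ β ≠ φ γ) :
    g κ = x :=
  transfinite_iteration_computes_the_fixedPoint_general S F hF x hx a g hg0 hgsucc hglim κ hκ
end

section
/- Let A be a directed-complete generalized ultrametric semilattice with distance set P, let F : A → A be strictly contracting, and let x ∈ A be a fixed point of F (F(x) = x). Then for every a ∈ A, a ⊑ x if and only if a ⊑ F(a). -/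
variable {A P : Type*} [SemilatticeInf A] [PartialOrder P] [OrderBot P]

/-- A strictly contracting map is weakly contracting. -/
lemma GUSemilattice.StrictlyContracting.le_d {S : GUSemilattice A P} {F : A → A}
    (hF : S.StrictlyContracting F) (u v : A) : S.d (F u) (F v) ≤ S.d u v := by
  by_cases h : u = v
  · subst h
    rw [(S.d_eq_bot_iff (F u) (F u)).2 rfl]
    exact bot_le
  · exact (hF u v h).le

/-- Any least upper bound of a set of post-fixed points of a strictly contracting
map is itself post-fixed. -/
lemma GUSemilattice.StrictlyContracting.isLUB_postFixed {S : GUSemilattice A P} {F : A → A}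
    (hF : S.StrictlyContracting F) {c : Set A} {s : A} (hs : IsLUB c s)
    (hpost : ∀ b ∈ c, b ≤ F b) : s ≤ F s := by
  have hub : ∀ b ∈ c, b ≤ F s := by
    intro b hb
    have hbpost : b ≤ F b := hpost b hb
    have hbs : b ≤ s := hs.1 hb
    -- d (b ⊓ F s) b ≤ d (F s) (F b) ≤ d s b
    have hmu : S.d (b ⊓ F s) b ≤ S.d (F s) (F b) := by
      have h := S.d_inf_inf_le b (F s) (F b)
      rwa [inf_eq_left.mpr hbpost] at h
    have hc1 : S.d (F s) (F b) ≤ S.d s b := hF.le_d s b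
    have hmu' : S.d b (b ⊓ F s) ≤ S.d s b := by
      rw [S.d_symm b (b ⊓ F s)]
      exact le_trans hmu hc1
    -- ultrametric: d s (b ⊓ F s) ≤ d s b
    have hultra : S.d s (b ⊓ F s) ≤ S.d s b :=
      S.d_ultra s b (b ⊓ F s) (S.d s b) (le_refl _) hmu'
    -- axiom (iv): s ⊓ b ≤ s ⊓ (b ⊓ F s)
    have hiv : s ⊓ b ≤ s ⊓ (b ⊓ F s) := S.inf_le_inf_of_d_le s (b ⊓ F s) b hultra
    have h1 : s ⊓ b = b := inf_eq_right.mpr hbs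
    have h2 : s ⊓ (b ⊓ F s) ≤ F s := le_trans inf_le_right inf_le_right
    calc b = s ⊓ b := h1.symm
      _ ≤ s ⊓ (b ⊓ F s) := hiv
      _ ≤ F s := h2
  have hwub : s ⊓ F s ∈ upperBounds c := by
    intro b hb
    exact le_inf (hs.1 hb) (hub b hb)
  exact le_trans (hs.2 hwub) inf_le_right

theorem le_fixedPoint_iff_postFixed
    (S : GUSemilattice A P) (hdc : DirectedComplete A)
    (F : A → A) (hF : S.StrictlyContracting F)
    (x : A) (hx : F x = x) :
    ∀ a : A, a ≤ x ↔ a ≤ F a := by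
  intro a
  constructor
  · -- easy direction: a ≤ x → a ≤ F a
    intro ha
    have h1 : S.d x (F a) ≤ S.d x a := by
      have h := hF.le_d x a
      rwa [hx] at h
    have h2 : x ⊓ a ≤ x ⊓ F a := S.inf_le_inf_of_d_le x (F a) a h1
    have h3 : x ⊓ a = a := inf_eq_right.mpr ha
    calc a = x ⊓ a := h3.symm
      _ ≤ x ⊓ F a := h2
      _ ≤ F a := inf_le_right
  · -- hard direction: a ≤ F a → a ≤ x
    intro ha
    -- Zorn's lemma on the set of post-fixed points above `a`.
    have hchains : ∀ c ⊆ {b : A | a ≤ b ∧ b ≤ F b}, IsChain (· ≤ ·) c → ∀ y ∈ c,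
        ∃ ub ∈ {b : A | a ≤ b ∧ b ≤ F b}, ∀ z ∈ c, z ≤ ub := by
      intro c hcY hchain y hy
      obtain ⟨s, hs⟩ := hdc c ⟨y, hy⟩ hchain.directedOn
      refine ⟨s, ⟨le_trans (hcY hy).1 (hs.1 hy), ?_⟩, fun z hz => hs.1 hz⟩
      exact hF.isLUB_postFixed hs fun b hb => (hcY hb).2
    obtain ⟨m, ham, hmax⟩ :=
      zorn_le_nonempty₀ {b : A | a ≤ b ∧ b ≤ F b} hchains a ⟨le_refl a, ha⟩
    obtain ⟨ham', hmpost⟩ := hmax.1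
    -- Step 1: m ≤ F m ⊓ F (F m)
    have h1 : S.d (F m) (F (F m)) ≤ S.d (F m) m := by
      have h := hF.le_d m (F m)
      rwa [S.d_symm m (F m)] at h
    have h2 : F m ⊓ m ≤ F m ⊓ F (F m) := S.inf_le_inf_of_d_le (F m) (F (F m)) m h1
    have hmG : m ≤ F m ⊓ F (F m) := by
      calc m = F m ⊓ m := (inf_eq_right.mpr hmpost).symm
        _ ≤ F m ⊓ F (F m) := h2
    -- Step 2: F m ⊓ F (F m) is post-fixed
    have h4 : S.d (F m ⊓ F (F m)) (F m) ≤ S.d (F (F m)) (F m) := by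
      have h := S.d_inf_inf_le (F m) (F (F m)) (F m)
      rwa [inf_idem] at h
    have h5 : S.d (F (F m)) (F (F m ⊓ F (F m))) ≤ S.d (F (F m)) (F m) := by
      have h5a : S.d (F (F m)) (F (F m ⊓ F (F m))) ≤ S.d (F m) (F m ⊓ F (F m)) :=
        hF.le_d (F m) (F m ⊓ F (F m))
      have h5b : S.d (F m) (F m ⊓ F (F m)) ≤ S.d (F (F m)) (F m) := by
        rw [S.d_symm (F m) (F m ⊓ F (F m))]
        exact h4
      exact le_trans h5a h5b
    have h6 : F (F m) ⊓ F m ≤ F (F m) ⊓ F (F m ⊓ F (F m)) :=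
      S.inf_le_inf_of_d_le (F (F m)) (F (F m ⊓ F (F m))) (F m) h5
    have h7 : F m ⊓ F (F m) ≤ F (F m ⊓ F (F m)) := by
      calc F m ⊓ F (F m) = F (F m) ⊓ F m := inf_comm _ _
        _ ≤ F (F m) ⊓ F (F m ⊓ F (F m)) := h6
        _ ≤ F (F m ⊓ F (F m)) := inf_le_right
    -- Step 3: by maximality, F m ⊓ F (F m) = m
    have htY : F m ⊓ F (F m) ∈ {b : A | a ≤ b ∧ b ≤ F b} :=
      ⟨le_trans ham' hmG, h7⟩
    have hmt : F m ⊓ F (F m) ≤ m := hmax.2 htY hmG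
    have hmeq : F m ⊓ F (F m) = m := le_antisymm hmt hmG
    -- Step 4: m is a fixed point
    have hfix : m = F m := by
      by_contra hne
      have hlt : S.d (F m) (F (F m)) < S.d m (F m) := hF m (F m) hne
      have hle : S.d m (F m) ≤ S.d (F (F m)) (F m) := by
        calc S.d m (F m) = S.d (F m ⊓ F (F m)) (F m) := by rw [hmeq]
          _ ≤ S.d (F (F m)) (F m) := h4
      have : S.d m (F m) < S.d m (F m) := by
        calc S.d m (F m) ≤ S.d (F (F m)) (F m) := hle
          _ = S.d (F m) (F (F m)) := S.d_symm _ _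
          _ < S.d m (F m) := hlt
      exact lt_irrefl _ this
    -- Step 5: m = x by uniqueness of fixed points
    have hmx : m = x := by
      by_contra hne
      have hlt : S.d (F m) (F x) < S.d m x := hF m x hne
      rw [hx, ← hfix] at hlt
      exact lt_irrefl _ hlt
    exact hmx ▸ ham
end

section
/- Let A be a directed-complete generalized ultrametric semilattice with distance set P, let F : A → A be strictly contracting, and let x ∈ A be a fixed point of F (F(x) = x). Let Q ⊆ A be a nonempty subset such that (a) every nonempty chain C ⊆ Q (totally ordered by ⊑) has a least upper bound in (A, ⊑) that belongs to Q, and (b) for every a ∈ Q, F(a) ⊓ F(F(a)) ∈ Q. Then x ∈ Q. -/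
variable {A P : Type*} [SemilatticeInf A] [PartialOrder P] [OrderBot P]

theorem fixedPoint_induction
    (S : GUSemilattice A P) (hdc : DirectedComplete A)
    (F : A → A) (hF : S.StrictlyContracting F)
    (x : A) (hx : F x = x)
    (Q : Set A) (hQne : Q.Nonempty)
    (hQchain : ∀ C : Set A, C ⊆ Q → C.Nonempty → IsChain (· ≤ ·) C →
      ∃ s : A, IsLUB C s ∧ s ∈ Q)
    (hQclosed : ∀ a ∈ Q, F a ⊓ F (F a) ∈ Q) :
    x ∈ Q := by
  classical
  -- reflexive distance is ⊥
  have drefl : ∀ u : A, S.d u u = ⊥ := fun u => (S.d_eq_bot_iff u u).2 rfl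
  -- non-strict contraction
  have dF : ∀ u v : A, S.d (F u) (F v) ≤ S.d u v := by
    intro u v
    rcases eq_or_ne u v with h | h
    · subst h; rw [drefl, drefl]
    · exact (hF u v h).le
  -- every G-image is a post-fixed point: F a ⊓ F (F a) ≤ F (F a ⊓ F (F a))
  have hGpost : ∀ a : A, F a ⊓ F (F a) ≤ F (F a ⊓ F (F a)) := by
    intro a
    have h1 : S.d (F a) (F a ⊓ F (F a)) ≤ S.d (F a) (F (F a)) := by
      have := S.d_inf_inf_le (F a) (F a) (F (F a))
      rwa [inf_idem] at this
    have h2 : S.d (F (F a)) (F (F a ⊓ F (F a))) ≤ S.d (F a) (F (F a)) :=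
      le_trans (dF (F a) (F a ⊓ F (F a))) h1
    have h3 : S.d (F a) (F (F a ⊓ F (F a))) ≤ S.d (F a) (F (F a)) :=
      S.d_ultra (F a) (F (F a)) (F (F a ⊓ F (F a))) _ le_rfl h2
    have h4 := S.inf_le_inf_of_d_le (F a) (F (F a ⊓ F (F a))) (F (F a)) h3
    exact le_trans h4 inf_le_right
  -- a post-fixed point lies below its G-image
  have hincr : ∀ a : A, a ≤ F a → a ≤ F a ⊓ F (F a) := by
    intro a ha
    have h1 : S.d (F a) (F (F a)) ≤ S.d (F a) a := by
      rw [S.d_symm (F a) a]; exact dF a (F a)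
    have h2 := S.inf_le_inf_of_d_le (F a) (F (F a)) a h1
    calc a = F a ⊓ a := (inf_eq_right.mpr ha).symm
    _ ≤ F a ⊓ F (F a) := h2
  -- the set of post-fixed points of Q
  set T : Set A := {a | a ∈ Q ∧ a ≤ F a} with hT
  have hTne : T.Nonempty := by
    obtain ⟨a₀, ha₀⟩ := hQne
    exact ⟨F a₀ ⊓ F (F a₀), hQclosed a₀ ha₀, hGpost a₀⟩
  -- chains in T have upper bounds in T (the crucial limit lemma)
  have hzorn : ∀ c ⊆ T, IsChain (· ≤ ·) c → ∃ ub ∈ T, ∀ z ∈ c, z ≤ ub := by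
    intro c hcT hchain
    rcases c.eq_empty_or_nonempty with rfl | hne
    · obtain ⟨t, ht⟩ := hTne; exact ⟨t, ht, by simp⟩
    · obtain ⟨s, hs, hsQ⟩ := hQchain c (fun z hz => (hcT hz).1) hne hchain
      have hub : ∀ z ∈ c, z ≤ s := fun z hz => hs.1 hz
      have hFub : F s ∈ upperBounds c := by
        intro z hz
        have hzF : z ≤ F z := (hcT hz).2
        -- d (z ⊓ F s) z = d (z ⊓ F s) (z ⊓ F z) ≤ d (F s) (F z) ≤ d s z
        have k1 : S.d (z ⊓ F s) z ≤ S.d (F s) (F z) := by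
          have := S.d_inf_inf_le z (F s) (F z)
          rwa [inf_eq_left.mpr hzF] at this
        have k2 : S.d (F s) (F z) ≤ S.d z s := by
          rw [S.d_symm z s]; exact dF s z
        have k3 : S.d z (z ⊓ F s) ≤ S.d z s := by
          rw [S.d_symm z (z ⊓ F s)]
          exact le_trans k1 k2
        have k4 := S.inf_le_inf_of_d_le z (z ⊓ F s) s k3
        -- k4 : z ⊓ s ≤ z ⊓ (z ⊓ F s)
        have k5 : z ≤ z ⊓ (z ⊓ F s) := by
          rwa [inf_eq_left.mpr (hub z hz)] at k4
        exact le_trans k5 (le_trans inf_le_right inf_le_right)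
      have hsF : s ≤ F s := hs.2 hFub
      exact ⟨s, ⟨hsQ, hsF⟩, hub⟩
  obtain ⟨m, hm⟩ := zorn_le₀ T hzorn
  obtain ⟨hmQ, hmF⟩ := hm.1
  -- maximality forces m = F m ⊓ F (F m)
  have hGmT : F m ⊓ F (F m) ∈ T := ⟨hQclosed m hmQ, hGpost m⟩
  have hle : m ≤ F m ⊓ F (F m) := hincr m hmF
  have heq : m = F m ⊓ F (F m) := le_antisymm hle (hm.2 hGmT hle)
  -- hence m = F m
  have hmFm : m = F m := by
    by_contra hne
    have hstrict := hF m (F m) hne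
    have hle2 : S.d m (F m) ≤ S.d (F m) (F (F m)) := by
      have h5 := S.d_inf_inf_le (F m) (F (F m)) (F m)
      rw [inf_idem, S.d_symm (F (F m)) (F m), ← heq] at h5
      exact h5
    exact absurd (lt_of_lt_of_le hstrict hle2) (lt_irrefl _)
  -- and m = x by uniqueness of fixed points
  have hmx : m = x := by
    by_contra hne
    have hstrict := hF m x hne
    rw [hx, ← hmFm] at hstrict
    exact lt_irrefl _ hstrict
  rw [← hmx]; exact hmQ
end
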